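/- Let {Ã_J : J ⊆ {1,…,N}} be a finite family of n×n real matrices, and suppose there exists a symmetric positive definite matrix P with Ã_J^T P Ã_J - P negative definite for all J ⊆ {1,…,N}. Let e : ℕ → ℝ^n satisfy e(k) = Ã_{I(k)} e(k-1) + g(k), where I(k) ⊆ {1,…,N} is arbitrary for each k and ‖g(k)‖ ≤ G for all k. Then the sequence e is bounded: there exists e_max ≥ 0 (depending on e(0), P, G) with ‖e(k)‖ ≤ e_max for all k. -/

import Mathlib

/-!
Factor `P = Bᵀ B` with `B` invertible, so that the Lyapunov function is `V x = ‖B x‖²`. The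
hypothesis `V (Ã_J x) < V x` for `x ≠ 0` says that the conjugate `B Ã_J B⁻¹` shrinks every nonzero
vector, hence, by compactness of the unit sphere, has operator norm `< 1`; with finitely many modes
there is a common rate `ρ < 1`. In the coordinates `y = B e` this gives
`‖y k‖ ≤ ρ ‖y (k - 1)‖ + ‖B‖ G`, so `‖y k‖ ≤ max ‖y 0‖ (‖B‖ G / (1 - ρ))`, and `e = B⁻¹ y` is bounded.
-/

open Matrix

open scoped RealInnerProductSpace

theorem le_max_of_le_mul_add {u : ℕ → ℝ} {ρ c : ℝ} (hρ₀ : 0 ≤ ρ) (hρ₁ : ρ < 1)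
    (hu : ∀ k, u (k + 1) ≤ ρ * u k + c) (k : ℕ) : u k ≤ max (u 0) (c / (1 - ρ)) := by
  set M := max (u 0) (c / (1 - ρ))
  have hcM : c ≤ (1 - ρ) * M := (div_le_iff₀' (sub_pos.2 hρ₁)).1 (le_max_right _ _)
  induction k with
  | zero => exact le_max_left _ _
  | succ k ih =>
    calc u (k + 1) ≤ ρ * u k + c := hu k
      _ ≤ ρ * M + (1 - ρ) * M := by gcongr
      _ = M := by ring

namespace ContinuousLinearMap

variable {E F : Type*} [NormedAddCommGroup E] [NormedSpace ℝ E]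
  [NormedAddCommGroup F] [NormedSpace ℝ F]

theorem opNorm_lt_one_of_norm_apply_lt [FiniteDimensional ℝ E] (T : E →L[ℝ] F)
    (hT : ∀ x ≠ 0, ‖T x‖ < ‖x‖) : ‖T‖ < 1 := by
  cases subsingleton_or_nontrivial E
  · simp [opNorm_subsingleton]
  have := FiniteDimensional.proper_real E
  obtain ⟨x₀, hx₀, hmax⟩ := (isCompact_sphere (0 : E) 1).exists_isMaxOn
    (NormedSpace.sphere_nonempty.2 zero_le_one) (continuous_norm.comp T.continuous).continuousOn
  have hx₀ : ‖x₀‖ = 1 := mem_sphere_zero_iff_norm.1 hx₀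
  calc ‖T‖ ≤ ‖T x₀‖ := opNorm_le_of_unit_norm (norm_nonneg _) fun x hx =>
          hmax (mem_sphere_zero_iff_norm.2 hx)
    _ < 1 := hx₀ ▸ hT x₀ (ne_zero_of_norm_ne_zero (by simp [hx₀]))

end ContinuousLinearMap

namespace ContinuousLinearEquiv

variable {E F : Type*} [NormedAddCommGroup E] [NormedSpace ℝ E]
  [NormedAddCommGroup F] [NormedSpace ℝ F]

theorem opNorm_conj_lt_one [FiniteDimensional ℝ F] (S : E ≃L[ℝ] F) (A : E →L[ℝ] E)
    (hA : ∀ x ≠ 0, ‖S (A x)‖ < ‖S x‖) : ‖(S : E →L[ℝ] F) ∘L A ∘L (S.symm : F →L[ℝ] E)‖ < 1 :=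
  ContinuousLinearMap.opNorm_lt_one_of_norm_apply_lt _ fun y hy => by
    simpa using hA (S.symm y) (by simpa using hy)

theorem exists_bound_of_opNorm_conj_lt_one {ι : Type*} [Finite ι] (S : E ≃L[ℝ] F)
    (A : ι → E →L[ℝ] E) (hA : ∀ i, ‖(S : E →L[ℝ] F) ∘L A i ∘L (S.symm : F →L[ℝ] E)‖ < 1)
    (σ : ℕ → ι) {e g : ℕ → E} {G : ℝ} (he : ∀ k, e (k + 1) = A (σ k) (e k) + g k)
    (hg : ∀ k, ‖g k‖ ≤ G) : ∃ M, ∀ k, ‖e k‖ ≤ M := by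
  have : Nonempty ι := ⟨σ 0⟩
  set C : ι → F →L[ℝ] F := fun i => (S : E →L[ℝ] F) ∘L A i ∘L (S.symm : F →L[ℝ] E)
  obtain ⟨i₀, hi₀⟩ := Finite.exists_max fun i => ‖C i‖
  have hstep : ∀ k, ‖S (e (k + 1))‖ ≤ ‖C i₀‖ * ‖S (e k)‖ + ‖(S : E →L[ℝ] F)‖ * G := by
    intro k
    have hconj : S (e (k + 1)) = C (σ k) (S (e k)) + S (g k) := by simp [C, he]
    rw [hconj]
    refine (norm_add_le _ _).trans (add_le_add ?_ ?_)
    · exact (C (σ k)).le_of_opNorm_le (hi₀ (σ k)) _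
    · exact (S : E →L[ℝ] F).le_of_opNorm_le_of_le le_rfl (hg k)
  refine ⟨‖(S.symm : F →L[ℝ] E)‖ * max ‖S (e 0)‖ (‖(S : E →L[ℝ] F)‖ * G / (1 - ‖C i₀‖)),
    fun k => ?_⟩
  calc ‖e k‖ = ‖S.symm (S (e k))‖ := by rw [S.symm_apply_apply]
    _ ≤ ‖(S.symm : F →L[ℝ] E)‖ * ‖S (e k)‖ := (S.symm : F →L[ℝ] E).le_opNorm _
    _ ≤ _ := by
      gcongr
      exact le_max_of_le_mul_add (u := fun k => ‖S (e k)‖) (norm_nonneg _) (hA i₀) hstep k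

end ContinuousLinearEquiv

namespace Matrix

variable {ι : Type*} [Fintype ι] [DecidableEq ι]

open scoped MatrixOrder in
theorem PosDef.exists_isUnit_eq_transpose_mul_self {P : Matrix ι ι ℝ} (hP : P.PosDef) :
    ∃ B : Matrix ι ι ℝ, IsUnit B ∧ P = Bᵀ * B := by
  obtain ⟨B, rfl⟩ := CStarAlgebra.nonneg_iff_eq_star_mul_self.mp hP.posSemidef.nonneg
  refine ⟨B, ?_, rfl⟩
  have hdet := (isUnit_iff_isUnit_det _).1 hP.isUnit
  rw [star_eq_conjTranspose, det_mul] at hdet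
  exact (isUnit_iff_isUnit_det B).2 (isUnit_of_mul_isUnit_right hdet)

theorem PosDef.inner_toEuclideanCLM_pos {M : Matrix ι ι ℝ} (hM : M.PosDef)
    {x : EuclideanSpace ℝ ι} (hx : x ≠ 0) : 0 < ⟪x, toEuclideanCLM (𝕜 := ℝ) M x⟫ := by
  rw [inner_toEuclideanCLM]
  simpa using hM.dotProduct_mulVec_pos (x := WithLp.ofLp x) (by simpa using hx)

theorem norm_toEuclideanCLM_apply_sq (B : Matrix ι ι ℝ) (x : EuclideanSpace ℝ ι) :
    ‖toEuclideanCLM (𝕜 := ℝ) B x‖ ^ 2 = ⟪x, toEuclideanCLM (𝕜 := ℝ) (Bᵀ * B) x⟫ := by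
  rw [← conjTranspose_eq_transpose_of_trivial, ← star_eq_conjTranspose, map_mul, map_star,
    ContinuousLinearMap.star_eq_adjoint, _root_.mul_apply_eq_comp,
    ContinuousLinearMap.adjoint_inner_right, real_inner_self_eq_norm_sq]

theorem norm_toEuclideanCLM_apply_lt_of_posDef {A B : Matrix ι ι ℝ}
    (h : (-(Aᵀ * (Bᵀ * B) * A - Bᵀ * B)).PosDef) {x : EuclideanSpace ℝ ι} (hx : x ≠ 0) :
    ‖toEuclideanCLM (𝕜 := ℝ) B (toEuclideanCLM (𝕜 := ℝ) A x)‖ <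
      ‖toEuclideanCLM (𝕜 := ℝ) B x‖ := by
  have hBA : Aᵀ * (Bᵀ * B) * A = (B * A)ᵀ * (B * A) := by simp only [transpose_mul, mul_assoc]
  have hpos := h.inner_toEuclideanCLM_pos hx
  rw [hBA, map_neg, map_sub, _root_.neg_apply, inner_neg_right, _root_.sub_apply, inner_sub_right,
    ← norm_toEuclideanCLM_apply_sq, ← norm_toEuclideanCLM_apply_sq, map_mul, neg_sub,
    sub_pos] at hpos
  exact (pow_lt_pow_iff_left₀ (norm_nonneg _) (norm_nonneg _) two_ne_zero).1 hpos

end Matrix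

/-- Common quadratic Lyapunov function implies boundedness of the arbitrarily
switching linear system with bounded inputs. -/
theorem stmt_6 {n N : ℕ}
    (Atil : Finset (Fin N) → Matrix (Fin n) (Fin n) ℝ)
    (P : Matrix (Fin n) (Fin n) ℝ) (hP : P.PosDef)
    (hlyap : ∀ J : Finset (Fin N), (-((Atil J)ᵀ * P * (Atil J) - P)).PosDef)
    (I : ℕ → Finset (Fin N)) (e g : ℕ → EuclideanSpace ℝ (Fin n)) (G : ℝ)
    (hrec : ∀ k : ℕ, 1 ≤ k → e k = Matrix.toEuclideanLin (Atil (I k)) (e (k - 1)) + g k)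
    (hg : ∀ k, ‖g k‖ ≤ G) :
    ∃ emax : ℝ, 0 ≤ emax ∧ ∀ k, ‖e k‖ ≤ emax := by
  obtain ⟨B, hB, rfl⟩ := hP.exists_isUnit_eq_transpose_mul_self
  let S := ContinuousLinearEquiv.unitsEquiv ℝ _ (hB.map (toEuclideanCLM (𝕜 := ℝ))).unit
  have hS : ∀ x, S x = toEuclideanCLM (𝕜 := ℝ) B x := fun x => by
    rw [ContinuousLinearEquiv.unitsEquiv_apply, IsUnit.unit_spec]
  have hcontr := fun J => S.opNorm_conj_lt_one (toEuclideanCLM (𝕜 := ℝ) (Atil J)) fun _ hx => by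
    simpa only [hS] using norm_toEuclideanCLM_apply_lt_of_posDef (hlyap J) hx
  obtain ⟨M, hM⟩ := S.exists_bound_of_opNorm_conj_lt_one _ hcontr (fun k => I (k + 1))
    (g := fun k => g (k + 1)) (fun k => hrec (k + 1) k.succ_pos) fun k => hg (k + 1)
  exact ⟨M, (norm_nonneg _).trans (hM 0), hM⟩
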